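/- arXiv:1603.04964 — 3 statements merged into one kernel-verified Lean document; each statement's English description precedes it below -/
import Mathlib

section
/- Let μ be a Borel probability measure on (S, d) with ∫ (p₁² + p₂²) μ(d(p₁, p₂, θ)) < ∞. Define F(x̂) = ∫_S d(x, x̂)² μ(dx), p̂₁ = ∫ p₁ dμ, p̂₂ = ∫ p₂ dμ, c̄ = ∫ cos θ dμ, s̄ = ∫ sin θ dμ. If c̄² + s̄² = 0, then F((p̂₁, p̂₂, θ)) has the same value for every θ ∈ [0, 2π), and for every θ ∈ [0, 2π) the point (p̂₁, p̂₂, θ) minimizes F over S. -/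
/-!
Expanding the square and using `cos² + sin² = 1`, for `z = (q₁, q₂, φ)`
`F(z) = ∫ (p₁² + p₂²) dμ + q₁² + q₂² + 4 - 2 (q₁ p̂₁ + q₂ p̂₂) - 4 (c̄ cos φ + s̄ sin φ)`.
When `c̄ = s̄ = 0` the angle drops out, and completing the square gives
`F(z) = F(p̂₁, p̂₂, φ) + (q₁ - p̂₁)² + (q₂ - p̂₂)²`.
-/

open MeasureTheory
open scoped ENNReal

noncomputable section

/-- The state space `S = ℝ² × [0, 2π)`. -/
abbrev S : Type := {x : ℝ × ℝ × ℝ // x.2.2 ∈ Set.Ico (0 : ℝ) (2 * Real.pi)}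

/-- The metric `d` on `S`. -/
noncomputable def dS (x y : S) : ℝ :=
  Real.sqrt ((x.1.1 - y.1.1) ^ 2 + (x.1.2.1 - y.1.2.1) ^ 2
    + 2 * (Real.cos x.1.2.2 - Real.cos y.1.2.2) ^ 2
    + 2 * (Real.sin x.1.2.2 - Real.sin y.1.2.2) ^ 2)

/-- The distortion functional `F(x̂) = ∫ d(x, x̂)² μ(dx)`. -/
noncomputable def FF (μ : Measure S) (z : S) : ℝ≥0∞ :=
  ∫⁻ x, ENNReal.ofReal (dS x z ^ 2) ∂μ

open Real

theorem MeasureTheory.Integrable.of_sq_le {α : Type*} [MeasurableSpace α] {μ : Measure α}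
    [IsFiniteMeasure μ] {f g : α → ℝ} (hg : Integrable g μ) (hf : AEStronglyMeasurable f μ)
    (hfg : ∀ x, f x ^ 2 ≤ g x) : Integrable f μ :=
  ((memLp_two_iff_integrable_sq hf).2 <|
    hg.mono' (hf.pow 2) (.of_forall fun x => by simpa using hfg x)).integrable one_le_two

theorem dS_sq (x z : S) :
    dS x z ^ 2 = (x.1.1 ^ 2 + x.1.2.1 ^ 2) + (z.1.1 ^ 2 + z.1.2.1 ^ 2 + 4)
      - 2 * z.1.1 * x.1.1 - 2 * z.1.2.1 * x.1.2.1
      - 4 * cos z.1.2.2 * cos x.1.2.2 - 4 * sin z.1.2.2 * sin x.1.2.2 := by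
  rw [dS, sq_sqrt (by positivity)]
  linear_combination 2 * sin_sq_add_cos_sq x.1.2.2 + 2 * sin_sq_add_cos_sq z.1.2.2

section

variable {μ : Measure S}

theorem integrable_sq_add_sq (hmom : ∫⁻ x, ENNReal.ofReal (x.1.1 ^ 2 + x.1.2.1 ^ 2) ∂μ < ⊤) :
    Integrable (fun x : S => x.1.1 ^ 2 + x.1.2.1 ^ 2) μ :=
  (lintegral_ofReal_ne_top_iff_integrable (by fun_prop) (.of_forall fun _ => by positivity)).1
    hmom.ne

variable [IsFiniteMeasure μ]

theorem integrable_cos : Integrable (fun x : S => cos x.1.2.2) μ :=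
  (integrable_const 1).mono' (by fun_prop) (.of_forall fun x => by simpa using abs_cos_le_one _)

theorem integrable_sin : Integrable (fun x : S => sin x.1.2.2) μ :=
  (integrable_const 1).mono' (by fun_prop) (.of_forall fun x => by simpa using abs_sin_le_one _)

theorem integrable_fst (hμ : Integrable (fun x : S => x.1.1 ^ 2 + x.1.2.1 ^ 2) μ) :
    Integrable (fun x : S => x.1.1) μ :=
  hμ.of_sq_le (by fun_prop) fun x => by nlinarith [sq_nonneg x.1.2.1]

theorem integrable_snd (hμ : Integrable (fun x : S => x.1.1 ^ 2 + x.1.2.1 ^ 2) μ) :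
    Integrable (fun x : S => x.1.2.1) μ :=
  hμ.of_sq_le (by fun_prop) fun x => by nlinarith [sq_nonneg x.1.1]

theorem integrable_dS_sq (hμ : Integrable (fun x : S => x.1.1 ^ 2 + x.1.2.1 ^ 2) μ) (z : S) :
    Integrable (fun x => dS x z ^ 2) μ := by
  have := integrable_fst hμ
  have := integrable_snd hμ
  have := integrable_cos (μ := μ)
  have := integrable_sin (μ := μ)
  simp_rw [dS_sq]
  fun_prop

theorem integral_dS_sq [IsProbabilityMeasure μ]
    (hμ : Integrable (fun x : S => x.1.1 ^ 2 + x.1.2.1 ^ 2) μ) (z : S) : ∫ x, dS x z ^ 2 ∂μ =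
    ∫ x, (x.1.1 ^ 2 + x.1.2.1 ^ 2) ∂μ + (z.1.1 ^ 2 + z.1.2.1 ^ 2 + 4)
      - 2 * z.1.1 * ∫ x, x.1.1 ∂μ - 2 * z.1.2.1 * ∫ x, x.1.2.1 ∂μ
      - 4 * cos z.1.2.2 * ∫ x, cos x.1.2.2 ∂μ - 4 * sin z.1.2.2 * ∫ x, sin x.1.2.2 ∂μ := by
  have := integrable_fst hμ
  have := integrable_snd hμ
  have := integrable_cos (μ := μ)
  have := integrable_sin (μ := μ)
  simp_rw [dS_sq]
  rw [integral_sub (by fun_prop) (by fun_prop), integral_sub (by fun_prop) (by fun_prop),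
    integral_sub (by fun_prop) (by fun_prop), integral_sub (by fun_prop) (by fun_prop),
    integral_add hμ (by fun_prop)]
  simp [integral_const_mul]

theorem FF_eq_ofReal_integral (hμ : Integrable (fun x : S => x.1.1 ^ 2 + x.1.2.1 ^ 2) μ)
    (z : S) :
    FF μ z = ENNReal.ofReal (∫ x, dS x z ^ 2 ∂μ) :=
  (ofReal_integral_eq_lintegral_ofReal (integrable_dS_sq hμ z)
    (.of_forall fun _ => sq_nonneg _)).symm

end

/-- If `c̄² + s̄² = 0`, then `F((p̂₁, p̂₂, θ))` has the same value for every
`θ ∈ [0, 2π)`, and every such point minimizes `F` over `S`. -/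
theorem optimal_estimate_of_alpha_zero (μ : Measure S) [IsProbabilityMeasure μ]
    (hmom : ∫⁻ x, ENNReal.ofReal (x.1.1 ^ 2 + x.1.2.1 ^ 2) ∂μ < ⊤)
    (p1 p2 cbar sbar : ℝ)
    (hp1 : p1 = ∫ x, x.1.1 ∂μ) (hp2 : p2 = ∫ x, x.1.2.1 ∂μ)
    (hc : cbar = ∫ x, Real.cos x.1.2.2 ∂μ) (hs : sbar = ∫ x, Real.sin x.1.2.2 ∂μ)
    (hα : cbar ^ 2 + sbar ^ 2 = 0) :
    (∀ x y : S, x.1.1 = p1 → x.1.2.1 = p2 → y.1.1 = p1 → y.1.2.1 = p2 →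
        FF μ x = FF μ y) ∧
    (∀ x : S, x.1.1 = p1 → x.1.2.1 = p2 → ∀ y : S, FF μ x ≤ FF μ y) := by
  have hμ := integrable_sq_add_sq hmom
  have hc0 : cbar = 0 := by nlinarith [sq_nonneg sbar]
  have hs0 : sbar = 0 := by nlinarith [sq_nonneg cbar]
  have hF (z : S) : FF μ z = ENNReal.ofReal (∫ x, (x.1.1 ^ 2 + x.1.2.1 ^ 2) ∂μ - p1 ^ 2 - p2 ^ 2
      + 4 + ((z.1.1 - p1) ^ 2 + (z.1.2.1 - p2) ^ 2)) := by
    rw [FF_eq_ofReal_integral hμ, integral_dS_sq hμ, ← hp1, ← hp2, ← hc, ← hs, hc0, hs0]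
    ring_nf
  refine ⟨fun x y hx1 hx2 hy1 hy2 => ?_, fun x hx1 hx2 y => ?_⟩
  · rw [hF, hF, hx1, hx2, hy1, hy2]
  · rw [hF, hF, hx1, hx2]
    refine ENNReal.ofReal_le_ofReal ?_
    nlinarith [sq_nonneg (y.1.1 - p1), sq_nonneg (y.1.2.1 - p2)]

end
end

section
/- Suppose κ is SE(2)-equivariant: for every g, x ∈ S, κ(M†(g, x)) equals the pushforward of κ(x) under the map M†(g, ·). Then for every j ∈ {k, …, N}, every g, x ∈ S and every x̂_{j:N} ∈ S^(N−j+1): J*_j(M†(g, x), (M†(g, x̂_j), …, M†(g, x̂_N))) = J*_j(x, x̂_{j:N}), and likewise G_j(M†(g, x), (M†(g, x̂_j), …, M†(g, x̂_N))) = G_j(x, x̂_{j:N}). -/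
open MeasureTheory Filter
open scoped ENNReal NNReal Topology

noncomputable section

/-- The initial state `x₀ = (0,0,0)`. -/
def origin : S := ⟨(0, 0, 0), ⟨le_rfl, by positivity⟩⟩

/-- `κ` is a Markov kernel on `S`. -/
def IsMarkov (κ : S → Measure S) : Prop :=
  (∀ x, IsProbabilityMeasure (κ x)) ∧
    ∀ A : Set S, MeasurableSet A → Measurable fun x => κ x A

/-- Continuity of a real-valued function with respect to the metric `dS`. -/
def DContinuous (g : S → ℝ) : Prop :=
  ∀ x : S, ∀ ε : ℝ, 0 < ε → ∃ δ : ℝ, 0 < δ ∧ ∀ y : S, dS x y < δ → |g y - g x| < ε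

/-- Openness with respect to the metric `dS`. -/
def DOpen (O : Set S) : Prop :=
  ∀ x ∈ O, ∃ δ : ℝ, 0 < δ ∧ ∀ y : S, dS x y < δ → y ∈ O

/-- Assumption 1 on the kernel `κ`. -/
def Assumption1 (κ : S → Measure S) : Prop :=
  (∀ A : Set S, MeasurableSet A → DContinuous fun x => (κ x A).toReal) ∧
    ∀ O : Set S, DOpen O → O.Nonempty → ∀ x : S, 0 < κ x O

/-- Auxiliary downward value recursion; the first argument is the number
`N + 1 - j` of remaining stages. -/
noncomputable def Jaux (κ : S → Measure S) (c' : ℕ → ℝ) (xhat : ℕ → S) :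
    ℕ → ℕ → S → ℝ≥0∞
  | 0, _, _ => 0
  | m + 1, j, x =>
      min (ENNReal.ofReal (dS x (xhat j) ^ 2) + ∫⁻ y, Jaux κ c' xhat m (j + 1) y ∂(κ x))
        (ENNReal.ofReal (c' j))

/-- The optimal cost-to-go `J*_j(x, x̂_{j:N})`. -/
noncomputable def JJ (κ : S → Measure S) (c' : ℕ → ℝ) (N : ℕ) (xhat : ℕ → S)
    (j : ℕ) (x : S) : ℝ≥0∞ :=
  Jaux κ c' xhat (N + 1 - j) j x

/-- `G_j(x, x̂_{j:N}) = ∫ J*_j(y, x̂_{j:N}) κ(x)(dy)`. -/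
noncomputable def Gj (κ : S → Measure S) (c' : ℕ → ℝ) (N : ℕ) (xhat : ℕ → S)
    (j : ℕ) (x : S) : ℝ≥0∞ :=
  ∫⁻ y, JJ κ c' N xhat j y ∂(κ x)

/-- `G(x̂_{k:N}) = G_k(x₀, x̂_{k:N})`. -/
noncomputable def Gtot (κ : S → Measure S) (c' : ℕ → ℝ) (k N : ℕ) (xhat : ℕ → S) : ℝ≥0∞ :=
  Gj κ c' N xhat k origin

/-- A randomized policy: a tuple of Borel measurable functions `f_j : S → [0,1]`. -/
def IsPolicy (k N : ℕ) (f : ℕ → S → ℝ≥0∞) : Prop :=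
  ∀ j, k ≤ j → j ≤ N → Measurable (f j) ∧ ∀ x, f j x ≤ 1

/-- Auxiliary cost-to-go recursion for a policy; first argument is `N + 1 - j`. -/
noncomputable def Vaux (κ : S → Measure S) (c' : ℕ → ℝ) (xhat : ℕ → S)
    (f : ℕ → S → ℝ≥0∞) : ℕ → ℕ → S → ℝ≥0∞
  | 0, _, _ => 0
  | m + 1, j, x =>
      f j x * (ENNReal.ofReal (dS x (xhat j) ^ 2) + ∫⁻ y, Vaux κ c' xhat f m (j + 1) y ∂(κ x))
        + (1 - f j x) * ENNReal.ofReal (c' j)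

/-- The cost-to-go `V_j` of a policy `f` with estimates `x̂`. -/
noncomputable def VV (κ : S → Measure S) (c' : ℕ → ℝ) (N : ℕ) (xhat : ℕ → S)
    (f : ℕ → S → ℝ≥0∞) (j : ℕ) (x : S) : ℝ≥0∞ :=
  Vaux κ c' xhat f (N + 1 - j) j x

/-- The total expected cost `C(f_{k:N}, x̂_{k:N})`. -/
noncomputable def Cost (κ : S → Measure S) (c' : ℕ → ℝ) (k N : ℕ) (xhat : ℕ → S)
    (f : ℕ → S → ℝ≥0∞) : ℝ≥0∞ :=
  ∫⁻ y, VV κ c' N xhat f k y ∂(κ origin)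

/-- `f ∈ 𝔓(x̂_{k:N})`: `f` minimizes the cost over all randomized policies. -/
def inP (κ : S → Measure S) (c' : ℕ → ℝ) (k N : ℕ) (xhat : ℕ → S)
    (f : ℕ → S → ℝ≥0∞) : Prop :=
  IsPolicy k N f ∧
    ∀ g : ℕ → S → ℝ≥0∞, IsPolicy k N g → Cost κ c' k N xhat f ≤ Cost κ c' k N xhat g

/-- `x̂ ∈ 𝔛(f_{k:N})`: the estimates minimize the cost for the policy `f`. -/
def inX (κ : S → Measure S) (c' : ℕ → ℝ) (k N : ℕ) (f : ℕ → S → ℝ≥0∞)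
    (xhat : ℕ → S) : Prop :=
  ∀ yhat : ℕ → S, Cost κ c' k N xhat f ≤ Cost κ c' k N yhat f

/-- Conditioning a measure on "no transmission" at stage `j`. -/
noncomputable def condMeas (f : ℕ → S → ℝ≥0∞) (j : ℕ) (μ : Measure S) : Measure S :=
  (∫⁻ x, f j x ∂μ)⁻¹ • μ.withDensity (f j)

/-- The predicted measures `μ_{j|j−1}`, by recursion on `j - k`. -/
noncomputable def mupredAux (κ : S → Measure S) (f : ℕ → S → ℝ≥0∞) (k : ℕ) :
    ℕ → Measure S
  | 0 => κ origin
  | n + 1 => (condMeas f (k + n) (mupredAux κ f k n)).bind κ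

/-- `μ_{j|j−1}`. -/
noncomputable def mupred (κ : S → Measure S) (f : ℕ → S → ℝ≥0∞) (k j : ℕ) : Measure S :=
  mupredAux κ f k (j - k)

/-- `q_j = ∫ f_j dμ_{j|j−1}`. -/
noncomputable def qq (κ : S → Measure S) (f : ℕ → S → ℝ≥0∞) (k j : ℕ) : ℝ≥0∞ :=
  ∫⁻ x, f j x ∂(mupred κ f k j)

/-- `μ_{j|j}`. -/
noncomputable def mucond (κ : S → Measure S) (f : ℕ → S → ℝ≥0∞) (k j : ℕ) : Measure S :=
  condMeas f j (mupred κ f k j)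

/-- Non-degeneracy of a policy. -/
def NonDeg (κ : S → Measure S) (f : ℕ → S → ℝ≥0∞) (k N : ℕ) : Prop :=
  ∀ j, k ≤ j → j ≤ N → 0 < qq κ f k j

/-- The closed "no transmission" region `D̄_j`. -/
noncomputable def Dbar (κ : S → Measure S) (c' : ℕ → ℝ) (N : ℕ) (xhat : ℕ → S)
    (j : ℕ) : Set S :=
  {x : S | ENNReal.ofReal (dS x (xhat j) ^ 2) + ∫⁻ y, JJ κ c' N xhat (j + 1) y ∂(κ x)
      ≤ ENNReal.ofReal (c' j)}

/-- The open "no transmission" region `Ḏ_j`. -/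
noncomputable def Dund (κ : S → Measure S) (c' : ℕ → ℝ) (N : ℕ) (xhat : ℕ → S)
    (j : ℕ) : Set S :=
  {x : S | ENNReal.ofReal (dS x (xhat j) ^ 2) + ∫⁻ y, JJ κ c' N xhat (j + 1) y ∂(κ x)
      < ENNReal.ofReal (c' j)}

/-- Hypothesis (H). -/
def HypH (κ : S → Measure S) (c' : ℕ → ℝ) (k N : ℕ) : Prop :=
  ∀ j, k ≤ j → j ≤ N → ∃ xhat : ℕ → S, (Dund κ c' N xhat j).Nonempty

/-- Weak convergence of measures on `(S, dS)`: tested against `dS`-continuous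
bounded functions. -/
def WeakConvS (μl : ℕ → Measure S) (μ : Measure S) : Prop :=
  ∀ h : S → ℝ, DContinuous h → (∃ C : ℝ, ∀ x, |h x| ≤ C) →
    Tendsto (fun l => ∫ x, h x ∂(μl l)) atTop (𝓝 (∫ x, h x ∂μ))

/-- Convergence of a sequence of (non-degenerate) policies to a policy. -/
def PolConv (κ : S → Measure S) (k N : ℕ) (g : ℕ → ℕ → S → ℝ≥0∞)
    (f : ℕ → S → ℝ≥0∞) : Prop :=
  ∀ j, k ≤ j → j ≤ N →
    WeakConvS (fun l => mucond κ (g l) k j) (mucond κ f k j) ∧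
      Tendsto (fun l => qq κ (g l) k j) atTop (𝓝 (qq κ f k j))

/-- The transformation `M†(g, ·)` of `S`. -/
noncomputable def Mdag (g x : S) : S :=
  ⟨(Real.cos g.1.2.2 * x.1.1 - Real.sin g.1.2.2 * x.1.2.1 + g.1.1,
    Real.sin g.1.2.2 * x.1.1 + Real.cos g.1.2.2 * x.1.2.1 + g.1.2.1,
    toIcoMod Real.two_pi_pos 0 (x.1.2.2 + g.1.2.2)),
   by simpa using toIcoMod_mem_Ico Real.two_pi_pos 0 (x.1.2.2 + g.1.2.2)⟩

/-- cos of toIcoMod. -/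
lemma cos_toIcoMod (b : ℝ) :
    Real.cos (toIcoMod Real.two_pi_pos 0 b) = Real.cos b := by
  rw [toIcoMod, zsmul_eq_mul]; exact Real.cos_sub_int_mul_two_pi b _

lemma sin_toIcoMod (b : ℝ) :
    Real.sin (toIcoMod Real.two_pi_pos 0 b) = Real.sin b := by
  rw [toIcoMod, zsmul_eq_mul]; exact Real.sin_sub_int_mul_two_pi b _

/-- `dS` is invariant under `Mdag g`. -/
lemma dS_Mdag (g x y : S) : dS (Mdag g x) (Mdag g y) = dS x y := by
  unfold dS Mdag
  simp only [cos_toIcoMod, sin_toIcoMod]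
  congr 1
  have h1 := Real.sin_sq_add_cos_sq g.1.2.2
  have hc := Real.cos_add x.1.2.2 g.1.2.2
  have hc' := Real.cos_add y.1.2.2 g.1.2.2
  have hs := Real.sin_add x.1.2.2 g.1.2.2
  have hs' := Real.sin_add y.1.2.2 g.1.2.2
  rw [hc, hc', hs, hs']
  linear_combination ((x.1.1 - y.1.1) ^ 2 + (x.1.2.1 - y.1.2.1) ^ 2
    + 2 * (Real.cos x.1.2.2 - Real.cos y.1.2.2) ^ 2
    + 2 * (Real.sin x.1.2.2 - Real.sin y.1.2.2) ^ 2) * h1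

lemma measurable_Mdag (g : S) : Measurable (Mdag g) := by
  apply Measurable.subtype_mk
  have h1 : Measurable fun x : S => x.1.1 := (measurable_fst).comp measurable_subtype_coe
  have h2 : Measurable fun x : S => x.1.2.1 :=
    (measurable_fst.comp measurable_snd).comp measurable_subtype_coe
  have h3 : Measurable fun x : S => x.1.2.2 :=
    (measurable_snd.comp measurable_snd).comp measurable_subtype_coe
  refine Measurable.prod ?_ (Measurable.prod ?_ ?_)
  · exact ((h1.const_mul _).sub (h2.const_mul _)).add_const _
  · exact ((h1.const_mul _).add (h2.const_mul _)).add_const _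
  · have : Measurable fun x : S => x.1.2.2 + g.1.2.2 := h3.add_const _
    have hm : Measurable fun b : ℝ => toIcoMod Real.two_pi_pos 0 b := by
      have : (fun b : ℝ => toIcoMod Real.two_pi_pos 0 b)
          = fun b => Int.fract (b / (2 * Real.pi)) * (2 * Real.pi) := by
        funext b; exact toIcoMod_eq_fract_mul _ b
      rw [this]
      exact ((measurable_id.div_const _).fract).mul_const _
    exact hm.comp this

lemma measurable_dS_sq (z : S) : Measurable fun x : S => dS x z ^ 2 := by
  have h1 : Measurable fun x : S => x.1.1 := (measurable_fst).comp measurable_subtype_coe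
  have h2 : Measurable fun x : S => x.1.2.1 :=
    (measurable_fst.comp measurable_snd).comp measurable_subtype_coe
  have h3 : Measurable fun x : S => x.1.2.2 :=
    (measurable_snd.comp measurable_snd).comp measurable_subtype_coe
  unfold dS
  apply Measurable.pow_const
  apply Measurable.sqrt
  apply Measurable.add
  apply Measurable.add
  apply Measurable.add
  · exact ((h1.sub_const _).pow_const _)
  · exact ((h2.sub_const _).pow_const _)
  · exact (((Real.measurable_cos.comp h3).sub_const _).pow_const _).const_mul _
  · exact (((Real.measurable_sin.comp h3).sub_const _).pow_const _).const_mul _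

/-- The kernel associated to a Markov map. -/
noncomputable def toKer (κ : S → Measure S) (hκ : IsMarkov κ) :
    ProbabilityTheory.Kernel S S :=
  ⟨κ, Measure.measurable_of_measurable_coe _ fun A hA => hκ.2 A hA⟩

lemma measurable_Jaux (κ : S → Measure S) (hκ : IsMarkov κ) (c' : ℕ → ℝ) (xhat : ℕ → S)
    (m : ℕ) : ∀ j, Measurable (Jaux κ c' xhat m j) := by
  induction m with
  | zero => intro j; simpa [Jaux] using measurable_const
  | succ m ih =>
      intro j
      haveI : ProbabilityTheory.IsMarkovKernel (toKer κ hκ) := ⟨hκ.1⟩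
      have hint : Measurable fun x : S => ∫⁻ y, Jaux κ c' xhat m (j + 1) y ∂(κ x) :=
        Measurable.lintegral_kernel (κ := toKer κ hκ) (ih (j + 1))
      have hd : Measurable fun x : S => ENNReal.ofReal (dS x (xhat j) ^ 2) :=
        ENNReal.measurable_ofReal.comp (measurable_dS_sq _)
      exact (hd.add hint).min measurable_const

lemma Jaux_equivariant (κ : S → Measure S) (hκ : IsMarkov κ)
    (hequiv : ∀ g x : S, κ (Mdag g x) = (κ x).map (Mdag g))
    (c' : ℕ → ℝ) (xhat : ℕ → S) (g : S) (m : ℕ) :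
    ∀ j x, Jaux κ c' (fun l => Mdag g (xhat l)) m j (Mdag g x) = Jaux κ c' xhat m j x := by
  induction m with
  | zero => intro j x; rfl
  | succ m ih =>
      intro j x
      simp only [Jaux]
      rw [dS_Mdag, hequiv,
        MeasureTheory.lintegral_map (measurable_Jaux κ hκ c' _ m (j + 1)) (measurable_Mdag g)]
      simp only [ih]

/-- If `κ` is SE(2)-equivariant, then `J*_j` and `G_j` are invariant under the
simultaneous action of `M†(g, ·)` on the state and on the estimates. -/
theorem Jstar_Gj_equivariant (κ : S → Measure S) (hκ : IsMarkov κ)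
    (hequiv : ∀ g x : S, κ (Mdag g x) = (κ x).map (Mdag g))
    (k N : ℕ) (hkN : k ≤ N) (c' : ℕ → ℝ) (hc' : ∀ j, k ≤ j → j ≤ N → 0 < c' j) :
    ∀ j, k ≤ j → j ≤ N → ∀ (g x : S) (xhat : ℕ → S),
      JJ κ c' N (fun l => Mdag g (xhat l)) j (Mdag g x) = JJ κ c' N xhat j x ∧
      Gj κ c' N (fun l => Mdag g (xhat l)) j (Mdag g x) = Gj κ c' N xhat j x := by
  intro j hj hj' g x xhat
  refine ⟨Jaux_equivariant κ hκ hequiv c' xhat g _ j x, ?_⟩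
  unfold Gj JJ
  rw [hequiv,
    MeasureTheory.lintegral_map (measurable_Jaux κ hκ c' _ _ j) (measurable_Mdag g)]
  simp only [Jaux_equivariant κ hκ hequiv c' xhat g]

end
end

section
/- Let x̂_{k:N} ∈ S^(N−k+1) and let f_{k:N} be a non-degenerate policy belonging to 𝔓(x̂_{k:N}). Then for every j ∈ {k, …, N}, μ_{j|j}({x ∈ S : d(x, x̂_j)² ≤ c'_j}) = 1; that is, conditionally on no transmission up to time j, the state lies in the closed d-ball of radius √(c'_j) around x̂_j with probability one. -/
open MeasureTheory Filter
open scoped ENNReal NNReal Topology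

noncomputable section

/-! Let `a_j(x) = d(x, x̂_j)² + ∫ V_{j+1} dκ(x)` be the cost of not transmitting at stage `j`.
If `f_j` put mass where `a_j > c'_j`, replacing `f_j` by `0` there would lower `V_j` by
`f_j (a_j - c'_j)`, and this gain reaches the total cost through the chain killed at
transmission, i.e. weighted by `μ_{j|j-1}`. Optimality of `f` (with a finite cost) forces the
gain to vanish `μ_{j|j-1}`-a.e., so `f_j = 0` a.e. outside `{a_j ≤ c'_j}`, a set contained in the
ball `{d(·, x̂_j)² ≤ c'_j}`; hence `μ_{j|j}` is carried by the ball. -/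

lemma measurable_dS (z : S) : Measurable fun x : S => dS x z := by
  unfold dS
  fun_prop

lemma IsMarkov.measurable {κ : S → Measure S} (hκ : IsMarkov κ) : Measurable κ :=
  Measure.measurable_of_measurable_coe _ hκ.2

section CostToGo

variable {κ : S → Measure S} {c' : ℕ → ℝ} {N : ℕ} {xhat : ℕ → S}

lemma measurable_Vaux (hκ : Measurable κ) {k : ℕ} {f : ℕ → S → ℝ≥0∞} (hf : IsPolicy k N f) :
    ∀ m j, k ≤ j → j + m ≤ N + 1 → Measurable (Vaux κ c' xhat f m j)
  | 0, _, _, _ => measurable_const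
  | m + 1, j, hkj, hjm => by
      have hfj : Measurable (f j) := (hf j hkj (by omega)).1
      have hV := measurable_Vaux hκ hf m (j + 1) (by omega) (by omega)
      exact (hfj.mul (((measurable_dS _).pow_const 2).ennreal_ofReal.add
        ((Measure.measurable_lintegral hV).comp hκ))).add
        ((measurable_const.sub hfj).mul measurable_const)

lemma Vaux_congr {f g : ℕ → S → ℝ≥0∞} :
    ∀ m j, (∀ i, j ≤ i → f i = g i) → Vaux κ c' xhat f m j = Vaux κ c' xhat g m j
  | 0, _, _ => rfl
  | m + 1, j, h => by
      funext x
      simp only [Vaux, h j le_rfl, Vaux_congr m (j + 1) fun i hi => h i (by omega)]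

lemma measurable_VV (hκ : Measurable κ) {k j : ℕ} {f : ℕ → S → ℝ≥0∞} (hf : IsPolicy k N f)
    (hkj : k ≤ j) (hjN : j ≤ N + 1) : Measurable (VV κ c' N xhat f j) :=
  measurable_Vaux hκ hf _ _ hkj (by omega)

lemma VV_congr {f g : ℕ → S → ℝ≥0∞} {j : ℕ} (h : ∀ i, j ≤ i → f i = g i) :
    VV κ c' N xhat f j = VV κ c' N xhat g j :=
  Vaux_congr _ _ h

def waitCost (κ : S → Measure S) (c' : ℕ → ℝ) (N : ℕ) (xhat : ℕ → S) (f : ℕ → S → ℝ≥0∞)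
    (j : ℕ) (x : S) : ℝ≥0∞ :=
  ENNReal.ofReal (dS x (xhat j) ^ 2) + ∫⁻ y, VV κ c' N xhat f (j + 1) y ∂(κ x)

lemma VV_of_le {f : ℕ → S → ℝ≥0∞} {j : ℕ} (hjN : j ≤ N) (x : S) :
    VV κ c' N xhat f j x
      = f j x * waitCost κ c' N xhat f j x + (1 - f j x) * ENNReal.ofReal (c' j) := by
  simp only [VV, waitCost]
  rw [show N + 1 - j = (N - j) + 1 by omega, show N + 1 - (j + 1) = N - j by omega]
  rfl

lemma measurable_waitCost (hκ : Measurable κ) {k j : ℕ} {f : ℕ → S → ℝ≥0∞}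
    (hf : IsPolicy k N f) (hkj : k ≤ j) (hjN : j ≤ N) :
    Measurable (waitCost κ c' N xhat f j) :=
  ((measurable_dS _).pow_const 2).ennreal_ofReal.add
    ((Measure.measurable_lintegral (measurable_VV hκ hf (by omega) (by omega))).comp hκ)

lemma Cost_zero (hκ : IsMarkov κ) {k : ℕ} (hkN : k ≤ N) :
    Cost κ c' k N xhat (fun _ _ => 0) = ENNReal.ofReal (c' k) := by
  have := hκ.1 origin
  simp [Cost, VV_of_le hkN]

lemma Cost_ne_top_of_inP (hκ : IsMarkov κ) {k : ℕ} {f : ℕ → S → ℝ≥0∞} (hkN : k ≤ N)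
    (hP : inP κ c' k N xhat f) : Cost κ c' k N xhat f ≠ ∞ :=
  ne_top_of_le_ne_top (by rw [Cost_zero hκ hkN]; exact ENNReal.ofReal_ne_top)
    (hP.2 _ fun _ _ _ => ⟨measurable_const, fun _ => zero_le_one⟩)

end CostToGo

/-- `killedIter κ f i n h` applies to `h` the transition operators of stages `i, …, i + n - 1`
of the chain killed at transmission, i.e. of the sub-Markov kernels `x ↦ f_l(x) κ(x)`. -/
def killedIter (κ : S → Measure S) (f : ℕ → S → ℝ≥0∞) : ℕ → ℕ → (S → ℝ≥0∞) → S → ℝ≥0∞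
  | _, 0, h => h
  | i, n + 1, h => fun x => f i x * ∫⁻ y, killedIter κ f (i + 1) n h y ∂(κ x)

section KilledChain

variable {κ : S → Measure S} {k N : ℕ} {f : ℕ → S → ℝ≥0∞} {h : S → ℝ≥0∞}

lemma measurable_killedIter (hκ : Measurable κ) (hf : IsPolicy k N f) (hh : Measurable h) :
    ∀ n i, k ≤ i → i + n ≤ N + 1 → Measurable (killedIter κ f i n h)
  | 0, _, _, _ => hh
  | n + 1, i, hki, hin =>
      (hf i hki (by omega)).1.mul <| (Measure.measurable_lintegral
        (measurable_killedIter hκ hf hh n (i + 1) (by omega) (by omega))).comp hκ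

lemma VV_eq_add_killedIter (hκ : Measurable κ) (hf : IsPolicy k N f) (hh : Measurable h)
    {c' : ℕ → ℝ} {xhat : ℕ → S} {g : ℕ → S → ℝ≥0∞} :
    ∀ n i, k ≤ i → i + n ≤ N + 1 → (∀ l, i ≤ l → l < i + n → g l = f l) →
      VV κ c' N xhat f (i + n) = VV κ c' N xhat g (i + n) + h →
      VV κ c' N xhat f i = VV κ c' N xhat g i + killedIter κ f i n h
  | 0, _, _, _, _, hV => hV
  | n + 1, i, hki, hin, hfg, hV => by
      have ih := VV_eq_add_killedIter hκ hf hh n (i + 1) (by omega) (by omega)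
        (fun l hl hl' => hfg l (by omega) (by omega)) (by rwa [Nat.add_right_comm])
      funext x
      rw [Pi.add_apply, VV_of_le (by omega), VV_of_le (by omega), waitCost, waitCost, ih,
        hfg i le_rfl (by omega)]
      simp only [Pi.add_apply, killedIter]
      rw [lintegral_add_right _
        (measurable_killedIter hκ hf hh n (i + 1) (by omega) (by omega))]
      ring

lemma mupred_self : mupred κ f k k = κ origin := by
  simp [mupred, mupredAux]

lemma mupred_succ {i : ℕ} (hki : k ≤ i) :
    mupred κ f k (i + 1) = (condMeas f i (mupred κ f k i)).bind κ := by
  unfold mupred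
  rw [show i + 1 - k = (i - k) + 1 by omega, mupredAux, Nat.add_sub_cancel' hki]

lemma lintegral_mupred_succ (hκ : Measurable κ) {i : ℕ} (hki : k ≤ i) (hfi : Measurable (f i))
    (hh : Measurable h) :
    ∫⁻ y, h y ∂(mupred κ f k (i + 1))
      = (qq κ f k i)⁻¹ * ∫⁻ x, f i x * ∫⁻ y, h y ∂(κ x) ∂(mupred κ f k i) := by
  rw [mupred_succ hki, Measure.lintegral_bind hκ.aemeasurable hh.aemeasurable, condMeas,
    lintegral_smul_measure, lintegral_withDensity_eq_lintegral_mul _ hfi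
      (show Measurable fun x => ∫⁻ y, h y ∂(κ x) from (Measure.measurable_lintegral hh).comp hκ)]
  rfl

lemma lintegral_mupred_eq_zero_of_killedIter (hκ : Measurable κ) (hf : IsPolicy k N f)
    (hh : Measurable h) : ∀ n i, k ≤ i → i + n ≤ N + 1 →
      ∫⁻ x, killedIter κ f i n h x ∂(mupred κ f k i) = 0 →
      ∫⁻ x, h x ∂(mupred κ f k (i + n)) = 0
  | 0, _, _, _, h0 => h0
  | n + 1, i, hki, hin, h0 => by
      rw [show i + (n + 1) = i + 1 + n by omega]
      refine lintegral_mupred_eq_zero_of_killedIter hκ hf hh n (i + 1) (by omega) (by omega) ?_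
      rw [lintegral_mupred_succ hκ hki (hf i hki (by omega)).1
        (measurable_killedIter hκ hf hh n (i + 1) (by omega) (by omega))]
      simp only [killedIter] at h0
      rw [h0, mul_zero]

end KilledChain

section Conditioning

variable {f : ℕ → S → ℝ≥0∞} {j : ℕ} {μ : Measure S} [IsFiniteMeasure μ]

lemma condMeas_apply_eq_one (hfj : ∀ x, f j x ≤ 1) (hq : ∫⁻ x, f j x ∂μ ≠ 0) {B : Set S}
    (hB : MeasurableSet B) (hfB : ∀ᵐ x ∂μ, x ∉ B → f j x = 0) : condMeas f j μ B = 1 := by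
  have hind : B.indicator (f j) =ᵐ[μ] f j := by
    filter_upwards [hfB] with x hx
    by_cases hxB : x ∈ B <;> simp [hxB, hx]
  have hq_top : ∫⁻ x, f j x ∂μ ≠ ∞ :=
    ne_top_of_le_ne_top (measure_ne_top μ Set.univ) ((lintegral_mono hfj).trans_eq (by simp))
  rw [condMeas, Measure.smul_apply, smul_eq_mul, withDensity_apply _ hB,
    ← lintegral_indicator hB, lintegral_congr_ae hind]
  exact ENNReal.inv_mul_cancel hq hq_top

lemma isProbabilityMeasure_condMeas (hfj : ∀ x, f j x ≤ 1) (hq : ∫⁻ x, f j x ∂μ ≠ 0) :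
    IsProbabilityMeasure (condMeas f j μ) :=
  ⟨condMeas_apply_eq_one hfj hq .univ (ae_of_all _ fun _ hx => (hx trivial).elim)⟩

end Conditioning

lemma isProbabilityMeasure_mupred {κ : S → Measure S} (hκ : IsMarkov κ) {k N : ℕ}
    {f : ℕ → S → ℝ≥0∞} (hf : IsPolicy k N f) (hnd : NonDeg κ f k N) {j : ℕ} (hkj : k ≤ j)
    (hjN : j ≤ N) : IsProbabilityMeasure (mupred κ f k j) := by
  induction j, hkj using Nat.le_induction with
  | base => rw [mupred_self]; exact hκ.1 origin
  | succ i hki ih =>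
      have := ih (by omega)
      have := isProbabilityMeasure_condMeas (μ := mupred κ f k i) (hf i hki (by omega)).2
        (hnd i hki (by omega)).ne'
      rw [mupred_succ hki]
      exact isProbabilityMeasure_bind hκ.measurable.aemeasurable (ae_of_all _ hκ.1)

lemma ENNReal.mul_add_one_sub_mul_eq {p a c : ℝ≥0∞} (hp : p ≤ 1) (hca : c ≤ a) :
    p * a + (1 - p) * c = c + p * (a - c) := by
  calc p * a + (1 - p) * c = p * (c + (a - c)) + (1 - p) * c := by
        rw [add_tsub_cancel_of_le hca]
    _ = (p + (1 - p)) * c + p * (a - c) := by ring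
    _ = c + p * (a - c) := by rw [add_tsub_cancel_of_le hp, one_mul]

def truncatePolicy (κ : S → Measure S) (c' : ℕ → ℝ) (N : ℕ) (xhat : ℕ → S)
    (f : ℕ → S → ℝ≥0∞) (j : ℕ) : ℕ → S → ℝ≥0∞ :=
  Function.update f j ({x | waitCost κ c' N xhat f j x ≤ ENNReal.ofReal (c' j)}.indicator (f j))

def waitExcess (κ : S → Measure S) (c' : ℕ → ℝ) (N : ℕ) (xhat : ℕ → S)
    (f : ℕ → S → ℝ≥0∞) (j : ℕ) (x : S) : ℝ≥0∞ :=
  f j x * (waitCost κ c' N xhat f j x - ENNReal.ofReal (c' j))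

section Deviation

variable {κ : S → Measure S} {c' : ℕ → ℝ} {k N : ℕ} {xhat : ℕ → S} {f : ℕ → S → ℝ≥0∞} {j : ℕ}

lemma isPolicy_truncatePolicy (hκ : Measurable κ) (hf : IsPolicy k N f) (hkj : k ≤ j)
    (hjN : j ≤ N) : IsPolicy k N (truncatePolicy κ c' N xhat f j) := by
  intro i hki hiN
  by_cases hij : i = j
  · subst hij
    simp only [truncatePolicy, Function.update_self]
    exact ⟨(hf i hki hiN).1.indicator
        (measurableSet_le (measurable_waitCost hκ hf hki hiN) measurable_const),
      fun x => (Set.indicator_le_self _ _ x).trans ((hf i hki hiN).2 x)⟩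
  · simpa only [truncatePolicy, Function.update_of_ne hij] using hf i hki hiN

lemma measurable_waitExcess (hκ : Measurable κ) (hf : IsPolicy k N f) (hkj : k ≤ j)
    (hjN : j ≤ N) : Measurable (waitExcess κ c' N xhat f j) :=
  (hf j hkj hjN).1.mul ((measurable_waitCost hκ hf hkj hjN).sub measurable_const)

lemma VV_eq_truncatePolicy_add (hjN : j ≤ N) (hfj : ∀ x, f j x ≤ 1) :
    VV κ c' N xhat f j = VV κ c' N xhat (truncatePolicy κ c' N xhat f j) j
      + waitExcess κ c' N xhat f j := by
  have hwait : waitCost κ c' N xhat (truncatePolicy κ c' N xhat f j) j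
      = waitCost κ c' N xhat f j := by
    unfold waitCost
    rw [VV_congr fun i hi => Function.update_of_ne (by omega) _ _]
  funext x
  rw [Pi.add_apply, VV_of_le hjN, VV_of_le hjN, hwait, truncatePolicy, Function.update_self,
    waitExcess]
  simp only [Set.indicator_apply, Set.mem_ofPred_eq]
  split_ifs with hx
  · rw [tsub_eq_zero_of_le hx, mul_zero, add_zero]
  · rw [zero_mul, tsub_zero, one_mul, zero_add]
    exact ENNReal.mul_add_one_sub_mul_eq (hfj x) (not_le.1 hx).le

lemma Cost_eq_add_killedIter_waitExcess (hκ : Measurable κ) (hf : IsPolicy k N f)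
    (hkj : k ≤ j) (hjN : j ≤ N) :
    Cost κ c' k N xhat f = Cost κ c' k N xhat (truncatePolicy κ c' N xhat f j)
      + ∫⁻ x, killedIter κ f k (j - k) (waitExcess κ c' N xhat f j) x ∂(κ origin) := by
  have hE := measurable_waitExcess hκ hf hkj hjN (c' := c') (xhat := xhat)
  have hVV := VV_eq_add_killedIter hκ hf hE (j - k) k le_rfl (by omega)
    (fun l _ hl => Function.update_of_ne (show l ≠ j by omega) _ _)
    (by rw [Nat.add_sub_cancel' hkj]; exact VV_eq_truncatePolicy_add hjN (hf j hkj hjN).2)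
  unfold Cost
  rw [hVV]
  exact lintegral_add_right _ (measurable_killedIter hκ hf hE _ _ le_rfl (by omega))

lemma lintegral_waitExcess_eq_zero (hκ : IsMarkov κ) (hP : inP κ c' k N xhat f) (hkj : k ≤ j)
    (hjN : j ≤ N) : ∫⁻ x, waitExcess κ c' N xhat f j x ∂(mupred κ f k j) = 0 := by
  have hdec := Cost_eq_add_killedIter_waitExcess (c' := c') (xhat := xhat)
    hκ.measurable hP.1 hkj hjN
  have hfin := Cost_ne_top_of_inP hκ (hkj.trans hjN) hP
  have hle := hP.2 _ (isPolicy_truncatePolicy (c' := c') (xhat := xhat)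
    hκ.measurable hP.1 hkj hjN)
  rw [hdec] at hfin hle
  have hkilled : ∫⁻ x, killedIter κ f k (j - k) (waitExcess κ c' N xhat f j) x ∂(κ origin) = 0 :=
    le_zero_iff.1 <| (ENNReal.add_le_add_iff_left (ENNReal.add_ne_top.1 hfin).1).1 <| by
      rwa [add_zero]
  simpa only [Nat.add_sub_cancel' hkj] using
    lintegral_mupred_eq_zero_of_killedIter hκ.measurable hP.1
      (measurable_waitExcess hκ.measurable hP.1 hkj hjN) (j - k) k le_rfl (by omega)
      (by rwa [mupred_self])

lemma sq_dS_le_of_waitCost_le (hc : 0 ≤ c' j) {x : S}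
    (hx : waitCost κ c' N xhat f j x ≤ ENNReal.ofReal (c' j)) : dS x (xhat j) ^ 2 ≤ c' j :=
  (ENNReal.ofReal_le_ofReal_iff hc).1 (le_self_add.trans hx)

end Deviation

theorem conditional_state_in_ball_general (κ : S → Measure S) (hκ : IsMarkov κ)
    (k N : ℕ) (c' : ℕ → ℝ) (hc' : ∀ j, k ≤ j → j ≤ N → 0 < c' j)
    (xhat : ℕ → S) (f : ℕ → S → ℝ≥0∞) (hnd : NonDeg κ f k N)
    (hP : inP κ c' k N xhat f) :
    ∀ j, k ≤ j → j ≤ N →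
      mucond κ f k j {x : S | dS x (xhat j) ^ 2 ≤ c' j} = 1 := by
  intro j hkj hjN
  have := isProbabilityMeasure_mupred hκ hP.1 hnd hkj hjN
  have hexcess := (lintegral_eq_zero_iff (measurable_waitExcess hκ.measurable hP.1 hkj hjN)).1
    (lintegral_waitExcess_eq_zero hκ hP hkj hjN)
  refine condMeas_apply_eq_one (hP.1 j hkj hjN).2 (hnd j hkj hjN).ne'
    (measurableSet_le ((measurable_dS _).pow_const 2) measurable_const) ?_
  filter_upwards [hexcess] with x hx hx_out
  rcases mul_eq_zero.1 hx with hf0 | hwait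
  · exact hf0
  · exact absurd (sq_dS_le_of_waitCost_le (hc' j hkj hjN).le (tsub_eq_zero_iff_le.1 hwait))
      hx_out

/-- If a non-degenerate policy `f` belongs to `𝔓(x̂_{k:N})`, then conditionally on
no transmission up to time `j`, the state lies in the closed `d`-ball of radius
`√(c'_j)` around `x̂_j` with probability one. -/
theorem conditional_state_in_ball (κ : S → Measure S) (hκ : IsMarkov κ)
    (k N : ℕ) (hkN : k ≤ N) (c' : ℕ → ℝ) (hc' : ∀ j, k ≤ j → j ≤ N → 0 < c' j)
    (xhat : ℕ → S) (f : ℕ → S → ℝ≥0∞) (hnd : NonDeg κ f k N)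
    (hP : inP κ c' k N xhat f) :
    ∀ j, k ≤ j → j ≤ N →
      mucond κ f k j {x : S | dS x (xhat j) ^ 2 ≤ c' j} = 1 :=
  conditional_state_in_ball_general κ hκ k N c' hc' xhat f hnd hP

end
end
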